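/- arXiv:1904.00606 — 7 statements merged into one kernel-verified Lean document; each statement's English description precedes it below -/
import Mathlib

section
/- If f : ℝⁿ → ℝ is Lipschitz with constant L, then φ_D is continuously differentiable on ℝⁿ, and for every x its derivative is given by averaging the (almost-everywhere defined, by Rademacher's theorem) derivative of f: fderiv φ_D (x) = (1/μ(D)) ∫_D fderiv f (x+y) dy. -/
/-!
For fixed `x`, Rademacher's theorem makes `f` differentiable at `x + y` for almost every `y`,
and `x ↦ f (x + y)` is `L`-Lipschitz uniformly in `y`, so one may differentiate under the
integral sign. The derivative `x ↦ ∫_D f' (x + y) dy = ∫_{x + D} f'` is continuous although `f'`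
need not be: `f'` is bounded by `L`, and `μ ((x + D) ∆ (x₀ + D)) → 0` as `x → x₀`.
-/

open MeasureTheory
open scoped NNReal

/-- The Steklov-type average of `f` over `D`. -/
noncomputable def steklovAvg (n : ℕ) (D : Set (EuclideanSpace ℝ (Fin n)))
    (f : EuclideanSpace ℝ (Fin n) → ℝ) (x : EuclideanSpace ℝ (Fin n)) : ℝ :=
  (volume D).toReal⁻¹ • ∫ y in D, f (x + y)

open Filter
open scoped symmDiff ENNReal Topology

theorem norm_setIntegral_sub_setIntegral_le_of_norm_le_const {α F : Type*} [MeasurableSpace α]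
    [NormedAddCommGroup F] [NormedSpace ℝ F] {μ : Measure α} {g : α → F} {C : ℝ}
    {A B : Set α} (hA : MeasurableSet A) (hB : MeasurableSet B) (hAμ : μ A ≠ ∞) (hBμ : μ B ≠ ∞)
    (hg : AEStronglyMeasurable g μ) (hC : ∀ z, ‖g z‖ ≤ C) :
    ‖∫ z in A, g z ∂μ - ∫ z in B, g z ∂μ‖ ≤ C * μ.real (A ∆ B) := by
  have hint : ∀ {S : Set α}, μ S ≠ ∞ → IntegrableOn g S μ := fun hS =>
    Integrable.mono' (integrableOn_const hS) hg.restrict (ae_of_all _ hC)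
  have hsplit : ∫ z in A, g z ∂μ - ∫ z in B, g z ∂μ =
      ∫ z in A \ B, g z ∂μ - ∫ z in B \ A, g z ∂μ := by
    rw [← integral_inter_add_sdiff hB (hint hAμ), ← integral_inter_add_sdiff hA (hint hBμ),
      Set.inter_comm]
    abel
  have hdiff : ∀ {S T : Set α}, μ S ≠ ∞ → ‖∫ z in S \ T, g z ∂μ‖ ≤ C * μ.real (S \ T) :=
    fun hS => norm_setIntegral_le_of_norm_le_const
      ((measure_mono Set.sdiff_subset).trans_lt hS.lt_top) fun z _ => hC z
  calc ‖∫ z in A, g z ∂μ - ∫ z in B, g z ∂μ‖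
      ≤ ‖∫ z in A \ B, g z ∂μ‖ + ‖∫ z in B \ A, g z ∂μ‖ := hsplit ▸ norm_sub_le _ _
    _ ≤ C * μ.real (A \ B) + C * μ.real (B \ A) := add_le_add (hdiff hAμ) (hdiff hBμ)
    _ = C * μ.real (A ∆ B) := by
      rw [measureReal_symmDiff_eq hA hB hAμ hBμ, mul_add]

section Translation

variable {G F : Type*} [AddGroup G] [TopologicalSpace G] [IsTopologicalAddGroup G]
  [MeasurableSpace G] [BorelSpace G] {μ : Measure G} [μ.IsAddLeftInvariant]
  [μ.InnerRegularCompactLTTop] [IsLocallyFiniteMeasure μ]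
  [NormedAddCommGroup F] [NormedSpace ℝ F]

theorem continuous_setIntegral_comp_add {g : G → F} {C : ℝ} (hg : AEStronglyMeasurable g μ)
    (hC : ∀ z, ‖g z‖ ≤ C) {D : Set G} (hD : MeasurableSet D) (hDμ : μ D ≠ ∞) :
    Continuous fun x => ∫ y in D, g (x + y) ∂μ := by
  -- `τ x = (· - x)`, so that `τ x ⁻¹' D = x + D`
  let τ : C(G, C(G, G)) := ContinuousMap.curry ⟨fun p => -p.1 + p.2, by fun_prop⟩
  have hτ : ∀ x, MeasurePreserving (τ x) μ μ := fun x => measurePreserving_add_left μ (-x)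
  have hτD : ∀ x, MeasurableSet (τ x ⁻¹' D) := fun x => (hτ x).measurable hD
  have hτDμ : ∀ x, μ (τ x ⁻¹' D) ≠ ∞ := fun x => by
    rwa [(hτ x).measure_preimage hD.nullMeasurableSet]
  have hrepr : ∀ x, ∫ y in D, g (x + y) ∂μ = ∫ z in τ x ⁻¹' D, g z ∂μ := fun x => by
    rw [← (measurePreserving_add_left μ x).setIntegral_image_emb
      (measurableEmbedding_addLeft x), Set.image_add_left]
    rfl
  simp only [hrepr]
  refine continuous_iff_continuousAt.2 fun x₀ => ?_
  rw [ContinuousAt, tendsto_iff_norm_sub_tendsto_zero]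
  have hsymm : Tendsto (fun x => μ.real ((τ x ⁻¹' D) ∆ (τ x₀ ⁻¹' D))) (𝓝 x₀) (𝓝 0) := by
    simpa [Function.comp_def, measureReal_def] using
      (ENNReal.tendsto_toReal ENNReal.zero_ne_top).comp <|
        tendsto_measure_symmDiff_preimage_nhds_zero (τ.continuous.tendsto x₀) (.of_forall hτ)
          (hτ x₀) hD.nullMeasurableSet hDμ
  refine squeeze_zero (fun _ => norm_nonneg _) (fun x => ?_) (by simpa using hsymm.const_mul C)
  exact norm_setIntegral_sub_setIntegral_le_of_norm_le_const (hτD x) (hτD x₀) (hτDμ x) (hτDμ x₀)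
    hg hC

end Translation

section Lipschitz

variable {E F : Type*} [NormedAddCommGroup E] [NormedSpace ℝ E] [FiniteDimensional ℝ E]
  [MeasurableSpace E] [BorelSpace E] {μ : Measure E} [μ.IsAddHaarMeasure]
  [NormedAddCommGroup F] [NormedSpace ℝ F] [FiniteDimensional ℝ F]
  {f : E → F} {K : ℝ≥0} {D : Set E}

theorem LipschitzWith.hasFDerivAt_setIntegral_comp_add (hf : LipschitzWith K f)
    (hD : IsCompact D) (x : E) :
    HasFDerivAt (fun x => ∫ y in D, f (x + y) ∂μ) (∫ y in D, fderiv ℝ f (x + y) ∂μ) x := by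
  have hfx : ∀ᵐ y ∂μ, DifferentiableAt ℝ f (x + y) :=
    (measurePreserving_add_left μ x).quasiMeasurePreserving.ae hf.ae_differentiableAt
  refine (hasFDerivAt_integral_of_dominated_loc_of_lip (bound := fun _ => (K : ℝ))
    univ_mem ?_ ?_ ?_ ?_ ?_ ?_).2
  · exact .of_forall fun x' =>
      (hf.continuous.comp (continuous_const_add x')).aestronglyMeasurable
  · exact (hf.continuous.comp (continuous_const_add x)).continuousOn.integrableOn_compact hD
  · exact ((measurable_fderiv ℝ f).comp (measurable_const_add x)).aestronglyMeasurable
  · refine .of_forall fun y => ?_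
    simpa [Function.comp_def] using hf.comp (isometry_add_right y).lipschitz
  · exact integrableOn_const hD.measure_lt_top.ne
  · exact ae_restrict_of_ae <| hfx.mono fun y hy =>
      hy.hasFDerivAt.comp x ((hasFDerivAt_id x).add_const y)

theorem LipschitzWith.continuous_setIntegral_fderiv_comp_add (hf : LipschitzWith K f)
    (hD : MeasurableSet D) (hDμ : μ D ≠ ∞) :
    Continuous fun x => ∫ y in D, fderiv ℝ f (x + y) ∂μ :=
  continuous_setIntegral_comp_add (measurable_fderiv ℝ f).aestronglyMeasurable
    (fun _ => norm_fderiv_le_of_lipschitz ℝ hf) hD hDμ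

end Lipschitz

theorem steklov_average_contDiff_and_fderiv_general (n : ℕ)
    (D : Set (EuclideanSpace ℝ (Fin n))) (hDc : IsCompact D)
    (f : EuclideanSpace ℝ (Fin n) → ℝ) (L : ℝ≥0) (hf : LipschitzWith L f) :
    ContDiff ℝ 1 (steklovAvg n D f) ∧
    ∀ x, fderiv ℝ (steklovAvg n D f) x =
      (volume D).toReal⁻¹ • ∫ y in D, fderiv ℝ f (x + y) := by
  set c := (volume D).toReal⁻¹
  have hderiv : ∀ x, HasFDerivAt (steklovAvg n D f) (c • ∫ y in D, fderiv ℝ f (x + y)) x :=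
    fun x => (hf.hasFDerivAt_setIntegral_comp_add (μ := volume) hDc x).const_smul c
  have hderiv_cont : Continuous fun x => c • ∫ y in D, fderiv ℝ f (x + y) :=
    (hf.continuous_setIntegral_fderiv_comp_add (μ := volume) hDc.measurableSet
      hDc.measure_lt_top.ne).fun_const_smul c
  exact ⟨contDiff_one_iff_hasFDerivAt.2 ⟨_, hderiv_cont, hderiv⟩, fun x => (hderiv x).fderiv⟩

/-- The Steklov-type average of a Lipschitz function is continuously differentiable,
with derivative the average of the (a.e. defined) derivative of `f`. -/
theorem steklov_average_contDiff_and_fderiv (n : ℕ) (hn : 1 ≤ n)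
    (D : Set (EuclideanSpace ℝ (Fin n))) (hDc : IsCompact D)
    (h0 : (0 : EuclideanSpace ℝ (Fin n)) ∈ interior D) (hD0 : 0 < volume D)
    (f : EuclideanSpace ℝ (Fin n) → ℝ) (L : ℝ≥0) (hf : LipschitzWith L f) :
    ContDiff ℝ 1 (steklovAvg n D f) ∧
    ∀ x, fderiv ℝ (steklovAvg n D f) x =
      (volume D).toReal⁻¹ • ∫ y in D, fderiv ℝ f (x + y) :=
  steklov_average_contDiff_and_fderiv_general n D hDc f L hf
end

section
/- If f : ℝⁿ → ℝ is Lipschitz with constant L and D is a closed Euclidean ball of radius r > 0 centered at the origin, then the second derivative map x ↦ iteratedFDeriv ℝ 2 Φ_D x of the double average Φ_D is Lipschitz: there exists a constant K ≥ 0 (depending on L and D) such that ‖iteratedFDeriv ℝ 2 Φ_D x₁ − iteratedFDeriv ℝ 2 Φ_D x₂‖ ≤ K ‖x₁ − x₂‖ for all x₁, x₂. -/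
open MeasureTheory
open scoped NNReal

/-- The double Steklov-type average of `f` over `D`. -/
noncomputable def steklovAvg₂ (n : ℕ) (D : Set (EuclideanSpace ℝ (Fin n)))
    (f : EuclideanSpace ℝ (Fin n) → ℝ) : EuclideanSpace ℝ (Fin n) → ℝ :=
  steklovAvg n D (steklovAvg n D f)

/-!
Write `A g` for the average of `g` over the ball of radius `r` around the point. Two facts drive
the proof. If `g` is Lipschitz, then by Rademacher's theorem it is differentiable almost
everywhere with `‖Dg‖ ≤ Lip g`, so one may differentiate under the integral: `D (A g) = A (Dg)`.
If `h` is merely bounded and measurable, then `A h` is Lipschitz, because the balls around `x₁`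
and `x₂` differ by a set of measure `O(‖x₁ - x₂‖)`. Applying these to `f` and then to the
Lipschitz map `D (A f) = A (Df)` gives `D² (A (A f)) = D (A (D (A f)))`, which is Lipschitz.
-/

open Measure Metric Set Filter

section SetIntegral

variable {α F : Type*} [MeasurableSpace α] [NormedAddCommGroup F] [NormedSpace ℝ F]

theorem norm_setIntegral_sub_setIntegral_le {ν : Measure α} {h : α → F} {M : ℝ}
    (hh : AEStronglyMeasurable h ν) (hM : ∀ a, ‖h a‖ ≤ M) {s t : Set α}
    (hs : MeasurableSet s) (ht : MeasurableSet t) (hνs : ν s ≠ ⊤) (hνt : ν t ≠ ⊤) :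
    ‖∫ a in s, h a ∂ν - ∫ a in t, h a ∂ν‖ ≤ M * (ν.real (s \ t) + ν.real (t \ s)) := by
  have hint : ∀ u, ν u ≠ ⊤ → IntegrableOn h u ν := fun u hu =>
    integrableOn_of_bounded hu hh (ae_of_all _ hM)
  have hsplit : ∫ a in s, h a ∂ν - ∫ a in t, h a ∂ν =
      ∫ a in s \ t, h a ∂ν - ∫ a in t \ s, h a ∂ν := by
    rw [← integral_inter_add_sdiff ht (hint s hνs), ← integral_inter_add_sdiff hs (hint t hνt),
      inter_comm]
    abel
  have hfin : ∀ u v, ν u ≠ ⊤ → ν (u \ v) < ⊤ := fun u v hu =>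
    (measure_mono sdiff_subset).trans_lt hu.lt_top
  rw [hsplit, mul_add]
  exact (norm_sub_le _ _).trans (add_le_add
    (norm_setIntegral_le_of_norm_le_const (hfin s t hνs) fun a _ => hM a)
    (norm_setIntegral_le_of_norm_le_const (hfin t s hνt) fun a _ => hM a))

end SetIntegral

section BallAverage

variable {E F : Type*} [NormedAddCommGroup E] [MeasurableSpace E]
  [NormedAddCommGroup F] [NormedSpace ℝ F]

noncomputable def ballAverage (μ : Measure E) (r : ℝ) (g : E → F) (x : E) : F :=
  (μ.real (closedBall 0 r))⁻¹ • ∫ y in closedBall (0 : E) r, g (x + y) ∂μ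

theorem ballAverage_eq_smul_setIntegral [BorelSpace E] {μ : Measure E} [μ.IsAddLeftInvariant]
    (r : ℝ) (g : E → F) (x : E) :
    ballAverage μ r g x = (μ.real (closedBall 0 r))⁻¹ • ∫ z in closedBall x r, g z ∂μ := by
  have hball : closedBall (0 : E) r = (x + ·) ⁻¹' closedBall x r := by
    rw [preimage_add_closedBall, sub_self]
  rw [ballAverage, hball, (measurePreserving_add_left μ x).setIntegral_preimage_emb
    (measurableEmbedding_addLeft x), ← hball]

end BallAverage

theorem steklovAvg₂_closedBall (n : ℕ) (r : ℝ) (f : EuclideanSpace ℝ (Fin n) → ℝ) :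
    steklovAvg₂ n (closedBall 0 r) f = ballAverage volume r (ballAverage volume r f) :=
  rfl

section Haar

variable {E F : Type*} [NormedAddCommGroup E] [NormedSpace ℝ E] [FiniteDimensional ℝ E]
  [MeasurableSpace E] [BorelSpace E] {μ : Measure E} [μ.IsAddHaarMeasure]
  [NormedAddCommGroup F] [NormedSpace ℝ F]

theorem measureReal_closedBall_diff_closedBall_le {r : ℝ} (hr : 0 ≤ r) {x₁ x₂ : E}
    (h : dist x₁ x₂ ≤ r) :
    μ.real (closedBall x₁ r \ closedBall x₂ r) ≤
      Module.finrank ℝ E * (2 * r) ^ (Module.finrank ℝ E - 1) * μ.real (closedBall 0 1) *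
        dist x₁ x₂ := by
  set d := dist x₁ x₂
  set k := Module.finrank ℝ E
  have hd : 0 ≤ d := dist_nonneg
  calc μ.real (closedBall x₁ r \ closedBall x₂ r)
      ≤ μ.real (closedBall x₂ (r + d) \ closedBall x₂ r) :=
        measureReal_mono (sdiff_subset_sdiff_left (closedBall_subset_closedBall' le_rfl))
          (measure_ne_top_of_subset sdiff_subset measure_closedBall_lt_top.ne)
    _ = ((r + d) ^ k - r ^ k) * μ.real (closedBall 0 1) := by
        rw [measureReal_sdiff (closedBall_subset_closedBall (by linarith)) measurableSet_closedBall
          measure_closedBall_lt_top.ne, addHaar_real_closedBall' μ _ (by linarith),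
          addHaar_real_closedBall' μ _ hr, sub_mul]
    _ ≤ k * (2 * r) ^ (k - 1) * μ.real (closedBall 0 1) * d := by
        have hpow : (r + d) ^ k - r ^ k ≤ k * (2 * r) ^ (k - 1) * d :=
          calc (r + d) ^ k - r ^ k ≤ |r + d - r| * k * max |r + d| |r| ^ (k - 1) :=
                (le_abs_self _).trans (abs_pow_sub_pow_le _ _ _)
            _ ≤ d * k * (2 * r) ^ (k - 1) := by
                rw [add_sub_cancel_left, abs_of_nonneg hd, abs_of_nonneg hr,
                  abs_of_nonneg (by linarith), max_eq_left (by linarith)]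
                gcongr
                linarith
            _ = k * (2 * r) ^ (k - 1) * d := by ring
        rw [mul_right_comm]
        exact mul_le_mul_of_nonneg_right hpow measureReal_nonneg

theorem exists_measureReal_closedBall_diff_closedBall_le {r : ℝ} (hr : 0 < r) :
    ∃ C, ∀ x₁ x₂ : E, μ.real (closedBall x₁ r \ closedBall x₂ r) ≤ C * dist x₁ x₂ := by
  set C₁ := Module.finrank ℝ E * (2 * r) ^ (Module.finrank ℝ E - 1) * μ.real (closedBall (0 : E) 1)
  set C₂ := μ.real (closedBall (0 : E) r) / r
  have hC₁ : 0 ≤ C₁ := by positivity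
  have hC₂ : 0 ≤ C₂ := by positivity
  refine ⟨C₁ + C₂, fun x₁ x₂ => ?_⟩
  rcases le_or_gt (dist x₁ x₂) r with hd | hd
  · calc μ.real (closedBall x₁ r \ closedBall x₂ r) ≤ C₁ * dist x₁ x₂ :=
          measureReal_closedBall_diff_closedBall_le hr.le hd
      _ ≤ (C₁ + C₂) * dist x₁ x₂ := by gcongr; linarith
  · calc μ.real (closedBall x₁ r \ closedBall x₂ r) ≤ μ.real (closedBall x₁ r) :=
          measureReal_mono sdiff_subset measure_closedBall_lt_top.ne
      _ = C₂ * r := by rw [addHaar_real_closedBall_center, div_mul_cancel₀ _ hr.ne']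
      _ ≤ (C₁ + C₂) * dist x₁ x₂ := by gcongr; linarith

theorem exists_lipschitzWith_ballAverage_of_norm_le {r : ℝ} (hr : 0 < r) {h : E → F} {M : ℝ}
    (hh : AEStronglyMeasurable h μ) (hM : ∀ x, ‖h x‖ ≤ M) :
    ∃ K, LipschitzWith K (ballAverage μ r h) := by
  obtain ⟨C, hC⟩ := exists_measureReal_closedBall_diff_closedBall_le (μ := μ) hr
  have hM₀ : 0 ≤ M := (norm_nonneg _).trans (hM 0)
  set c := (μ.real (closedBall (0 : E) r))⁻¹
  refine ⟨_, LipschitzWith.of_dist_le' (K := c * (M * (2 * C))) fun x₁ x₂ => ?_⟩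
  rw [dist_eq_norm, ballAverage_eq_smul_setIntegral, ballAverage_eq_smul_setIntegral, ← smul_sub,
    norm_smul, Real.norm_of_nonneg (by positivity)]
  calc c * ‖∫ z in closedBall x₁ r, h z ∂μ - ∫ z in closedBall x₂ r, h z ∂μ‖
      ≤ c * (M * (μ.real (closedBall x₁ r \ closedBall x₂ r) +
          μ.real (closedBall x₂ r \ closedBall x₁ r))) := by
        gcongr
        exact norm_setIntegral_sub_setIntegral_le hh hM measurableSet_closedBall
          measurableSet_closedBall measure_closedBall_lt_top.ne measure_closedBall_lt_top.ne
    _ ≤ c * (M * (C * dist x₁ x₂ + C * dist x₂ x₁)) := by gcongr <;> apply hC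
    _ = c * (M * (2 * C)) * dist x₁ x₂ := by rw [dist_comm x₂]; ring

theorem lipschitzWith_ballAverage {M : ℝ≥0} {g : E → F} (hg : LipschitzWith M g) (r : ℝ) :
    LipschitzWith M (ballAverage μ r g) := by
  refine LipschitzWith.of_dist_le_mul fun x₁ x₂ => ?_
  have hint : ∀ x, IntegrableOn (fun y => g (x + y)) (closedBall 0 r) μ := fun x =>
    (hg.continuous.comp (continuous_const_add x)).continuousOn.integrableOn_compact
      (isCompact_closedBall 0 r)
  set c := (μ.real (closedBall (0 : E) r))⁻¹
  rw [dist_eq_norm, ballAverage, ballAverage, ← smul_sub,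
    ← integral_sub (hint x₁) (hint x₂), norm_smul, Real.norm_of_nonneg (by positivity)]
  calc c * ‖∫ y in closedBall 0 r, (g (x₁ + y) - g (x₂ + y)) ∂μ‖
      ≤ c * (M * dist x₁ x₂ * μ.real (closedBall 0 r)) := by
        gcongr
        refine norm_setIntegral_le_of_norm_le_const measure_closedBall_lt_top fun y _ => ?_
        simpa [dist_eq_norm] using hg.dist_le_mul (x₁ + y) (x₂ + y)
    _ ≤ M * dist x₁ x₂ := by
        rw [mul_left_comm]
        exact mul_le_of_le_one_right (by positivity) (inv_mul_le_one_of_le₀ le_rfl measureReal_nonneg)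

-- Rademacher's theorem supplies the a.e. derivative, and the Lipschitz bound dominates the
-- difference quotients, so the derivative passes under the integral.
theorem hasFDerivAt_ballAverage [FiniteDimensional ℝ F] {M : ℝ≥0} {g : E → F}
    (hg : LipschitzWith M g) (r : ℝ) (x : E) :
    HasFDerivAt (ballAverage μ r g) (ballAverage μ r (fderiv ℝ g) x) x := by
  have hdiff : ∀ᵐ y ∂μ.restrict (closedBall 0 r),
      HasFDerivAt (fun x' => g (x' + y)) (fderiv ℝ g (x + y)) x := by
    refine ae_restrict_of_ae ?_
    filter_upwards [(measurePreserving_add_left μ x).quasiMeasurePreserving.ae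
      hg.ae_differentiableAt] with y hy
    exact (hasFDerivAt_comp_add_right y).2 hy.hasFDerivAt
  have hcont : ∀ x', Continuous fun y => g (x' + y) := fun x' =>
    hg.continuous.comp (continuous_const_add x')
  obtain ⟨-, h⟩ := hasFDerivAt_integral_of_dominated_loc_of_lip (μ := μ.restrict (closedBall 0 r))
    (F := fun x' y => g (x' + y)) (bound := fun _ => (M : ℝ)) univ_mem
    (Eventually.of_forall fun x' => (hcont x').aestronglyMeasurable)
    ((hcont x).continuousOn.integrableOn_compact (isCompact_closedBall 0 r))
    ((measurable_fderiv ℝ g).comp (measurable_const_add x)).aestronglyMeasurable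
    (ae_of_all _ fun y => by
      simpa only [Real.nnabs_coe, mul_one, Function.comp_def] using
        (hg.comp (isometry_add_right y).lipschitz).lipschitzOnWith (s := univ))
    (integrableOn_const measure_closedBall_lt_top.ne) hdiff
  exact h.const_smul _

theorem fderiv_ballAverage [FiniteDimensional ℝ F] {M : ℝ≥0} {g : E → F}
    (hg : LipschitzWith M g) (r : ℝ) :
    fderiv ℝ (ballAverage μ r g) = ballAverage μ r (fderiv ℝ g) :=
  funext fun x => (hasFDerivAt_ballAverage hg r x).fderiv

theorem exists_lipschitzWith_fderiv_ballAverage [FiniteDimensional ℝ F] {r : ℝ} (hr : 0 < r)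
    {M : ℝ≥0} {g : E → F} (hg : LipschitzWith M g) :
    ∃ K, LipschitzWith K (fderiv ℝ (ballAverage μ r g)) := by
  rw [fderiv_ballAverage hg]
  exact exists_lipschitzWith_ballAverage_of_norm_le hr
    (measurable_fderiv ℝ g).aestronglyMeasurable fun _ => norm_fderiv_le_of_lipschitz ℝ hg

end Haar

theorem LipschitzWith.iteratedFDeriv_two {𝕜 E F : Type*} [NontriviallyNormedField 𝕜]
    [NormedAddCommGroup E] [NormedSpace 𝕜 E] [NormedAddCommGroup F] [NormedSpace 𝕜 F]
    {f : E → F} {K : ℝ≥0} (h : LipschitzWith K (fderiv 𝕜 (fderiv 𝕜 f))) :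
    LipschitzWith K (iteratedFDeriv 𝕜 2 f) := by
  refine LipschitzWith.of_dist_le_mul fun x y => ?_
  rw [dist_eq_norm, dist_eq_norm]
  refine ContinuousMultilinearMap.opNorm_le_bound (by positivity) fun m => ?_
  calc ‖(iteratedFDeriv 𝕜 2 f x - iteratedFDeriv 𝕜 2 f y) m‖
      = ‖(fderiv 𝕜 (fderiv 𝕜 f) x - fderiv 𝕜 (fderiv 𝕜 f) y) (m 0) (m 1)‖ := by
        simp only [_root_.sub_apply, iteratedFDeriv_two_apply]
    _ ≤ ‖fderiv 𝕜 (fderiv 𝕜 f) x - fderiv 𝕜 (fderiv 𝕜 f) y‖ * ‖m 0‖ * ‖m 1‖ :=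
        ContinuousLinearMap.le_opNorm₂ _ _ _
    _ ≤ K * ‖x - y‖ * ‖m 0‖ * ‖m 1‖ := by
        gcongr
        exact h.norm_sub_le x y
    _ = K * ‖x - y‖ * ∏ i, ‖m i‖ := by rw [Fin.prod_univ_two, mul_assoc]

theorem steklov_double_average_second_deriv_lipschitz_general (n : ℕ)
    (r : ℝ) (hr : 0 < r)
    (f : EuclideanSpace ℝ (Fin n) → ℝ) (L : ℝ≥0) (hf : LipschitzWith L f) :
    ∃ K : ℝ, 0 ≤ K ∧ ∀ x₁ x₂ : EuclideanSpace ℝ (Fin n),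
      ‖iteratedFDeriv ℝ 2 (steklovAvg₂ n (Metric.closedBall 0 r) f) x₁ -
        iteratedFDeriv ℝ 2 (steklovAvg₂ n (Metric.closedBall 0 r) f) x₂‖ ≤
        K * ‖x₁ - x₂‖ := by
  rw [steklovAvg₂_closedBall]
  have hΦ : fderiv ℝ (ballAverage volume r (ballAverage volume r f)) =
      ballAverage volume r (fderiv ℝ (ballAverage volume r f)) :=
    fderiv_ballAverage (lipschitzWith_ballAverage hf r) r
  obtain ⟨K₁, hK₁⟩ := exists_lipschitzWith_fderiv_ballAverage (μ := volume) hr hf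
  obtain ⟨K₂, hK₂⟩ := exists_lipschitzWith_fderiv_ballAverage (μ := volume) hr hK₁
  rw [← hΦ] at hK₂
  refine ⟨K₂, K₂.coe_nonneg, fun x₁ x₂ => ?_⟩
  simpa only [dist_eq_norm] using hK₂.iteratedFDeriv_two.dist_le_mul x₁ x₂

/-- For Lipschitz `f` and `D` a closed ball of radius `r > 0` centered at the origin,
the second derivative map of the double Steklov average is Lipschitz. -/
theorem steklov_double_average_second_deriv_lipschitz (n : ℕ) (hn : 1 ≤ n)
    (r : ℝ) (hr : 0 < r)
    (f : EuclideanSpace ℝ (Fin n) → ℝ) (L : ℝ≥0) (hf : LipschitzWith L f) :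
    ∃ K : ℝ, 0 ≤ K ∧ ∀ x₁ x₂ : EuclideanSpace ℝ (Fin n),
      ‖iteratedFDeriv ℝ 2 (steklovAvg₂ n (Metric.closedBall 0 r) f) x₁ -
        iteratedFDeriv ℝ 2 (steklovAvg₂ n (Metric.closedBall 0 r) f) x₂‖ ≤
        K * ‖x₁ - x₂‖ :=
  steklov_double_average_second_deriv_lipschitz_general n r hr f L hf
end

section
/- If f : ℝⁿ → ℝ is Lipschitz with constant L and D is a closed Euclidean ball of radius r > 0 centered at the origin, then the second derivative of the double average Φ_D is uniformly bounded: there exists a constant K ≥ 0 such that ‖iteratedFDeriv ℝ 2 Φ_D x‖ ≤ K for all x ∈ ℝⁿ. -/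
open MeasureTheory
open scoped NNReal

namespace SteklovAux

open Metric Filter Set
open scoped ENNReal Topology

abbrev Euc (n : ℕ) := EuclideanSpace ℝ (Fin n)

lemma vol_pos (n : ℕ) {r : ℝ} (hr : 0 < r) :
    0 < (volume (closedBall (0 : Euc n) r)).toReal :=
  ENNReal.toReal_pos (measure_closedBall_pos _ _ hr).ne' measure_closedBall_lt_top.ne

lemma integrableOn_comp_add {n : ℕ} {g : Euc n → ℝ} (hg : Continuous g) (x : Euc n) (r : ℝ) :
    IntegrableOn (fun y => g (x + y)) (closedBall (0 : Euc n) r) :=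
  ((hg.comp (continuous_const.add continuous_id)).continuousOn).integrableOn_compact (isCompact_closedBall _ _)

lemma lip_translate {n : ℕ} {g : Euc n → ℝ} {L : ℝ≥0} (hg : LipschitzWith L g) (y : Euc n) :
    LipschitzWith L (fun x => g (x + y)) := by
  apply LipschitzWith.of_dist_le_mul
  intro a b
  simpa [dist_add_right] using hg.dist_le_mul (a + y) (b + y)

lemma lipschitz_steklovAvg {n : ℕ} {r : ℝ} (hr : 0 < r) {g : Euc n → ℝ} {L : ℝ≥0}
    (hg : LipschitzWith L g) : LipschitzWith L (steklovAvg n (closedBall 0 r) g) := by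
  set D := closedBall (0 : Euc n) r with hD
  have hvol : 0 < (volume D).toReal := vol_pos n hr
  apply LipschitzWith.of_dist_le_mul
  intro x x'
  have hint : ∀ z : Euc n, IntegrableOn (fun y => g (z + y)) D := fun z =>
    integrableOn_comp_add hg.continuous z r
  have key : steklovAvg n D g x - steklovAvg n D g x'
      = (volume D).toReal⁻¹ * ∫ y in D, (g (x + y) - g (x' + y)) := by
    rw [integral_sub (hint x) (hint x')]
    simp [steklovAvg, smul_eq_mul, mul_sub]
  rw [dist_eq_norm, key]
  have hbound : ‖∫ y in D, (g (x + y) - g (x' + y))‖ ≤ (L * dist x x') * (volume D).toReal := by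
    apply norm_setIntegral_le_of_norm_le_const measure_closedBall_lt_top
    intro y _
    have h := hg.dist_le_mul (x + y) (x' + y)
    rwa [dist_add_right, Real.dist_eq, ← Real.norm_eq_abs] at h
  calc ‖(volume D).toReal⁻¹ * ∫ y in D, (g (x + y) - g (x' + y))‖
      = (volume D).toReal⁻¹ * ‖∫ y in D, (g (x + y) - g (x' + y))‖ := by
        rw [norm_mul, Real.norm_eq_abs, abs_of_nonneg (by positivity)]
    _ ≤ (volume D).toReal⁻¹ * ((L * dist x x') * (volume D).toReal) :=
        mul_le_mul_of_nonneg_left hbound (by positivity)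
    _ = L * dist x x' := by field_simp

lemma hasFDerivAt_steklovAvg {n : ℕ} {r : ℝ} (hr : 0 < r) {g : Euc n → ℝ} {L : ℝ≥0}
    (hg : LipschitzWith L g) (x₀ : Euc n) :
    HasFDerivAt (steklovAvg n (closedBall 0 r) g)
      ((volume (closedBall (0 : Euc n) r)).toReal⁻¹ •
        ∫ y in closedBall (0 : Euc n) r, fderiv ℝ g (x₀ + y)) x₀ := by
  set D := closedBall (0 : Euc n) r with hD
  have hmeas : ∀ x : Euc n, AEStronglyMeasurable (fun y => g (x + y)) (volume.restrict D) :=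
    fun x => ((hg.continuous.comp (continuous_const.add continuous_id)).aestronglyMeasurable)
  have h := hasFDerivAt_integral_of_dominated_loc_of_lip
    (μ := volume.restrict D) (F := fun x y => g (x + y))
    (F' := fun y => fderiv ℝ g (x₀ + y)) (x₀ := x₀) (bound := fun _ => (L : ℝ))
    (s := Metric.ball x₀ 1) (Metric.ball_mem_nhds x₀ one_pos)
    (Filter.Eventually.of_forall hmeas)
    (integrableOn_comp_add hg.continuous x₀ r)
    (((measurable_fderiv ℝ g).comp (measurable_const_add x₀)).aestronglyMeasurable)
    ?_ ?_ ?_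
  · exact h.2.const_smul ((volume D).toReal⁻¹)
  · refine Filter.Eventually.of_forall fun y => ?_
    have hnn : Real.nnabs (L : ℝ) = L := by
      ext; simp [Real.coe_nnabs]
    rw [hnn]
    exact (lip_translate hg y).lipschitzOnWith
  · exact integrableOn_const measure_closedBall_lt_top.ne
  · have h1 : ∀ᵐ z ∂(volume : Measure (Euc n)), DifferentiableAt ℝ g z :=
      hg.ae_differentiableAt
    have h2 : ∀ᵐ y ∂(volume : Measure (Euc n)), DifferentiableAt ℝ g (x₀ + y) :=
      (measurePreserving_add_left volume x₀).quasiMeasurePreserving.ae h1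
    refine ae_restrict_of_ae (h2.mono fun y hy => ?_)
    have hcomp := (hy.hasFDerivAt).comp x₀ ((hasFDerivAt_id x₀).add_const y)
    exact hcomp

lemma pow_sub_le {r d : ℝ} (hr : 0 < r) (hd : 0 ≤ d) (hdr : d ≤ r) (n : ℕ) :
    (r + d) ^ n - r ^ n ≤ ((n : ℝ) * (2 * r) ^ (n - 1)) * d := by
  rw [← geom_sum₂_mul]
  have he : (r + d) - r = d := by ring
  rw [he]
  apply mul_le_mul_of_nonneg_right _ hd
  calc ∑ i ∈ Finset.range n, (r + d) ^ i * r ^ (n - 1 - i)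
      ≤ ∑ _i ∈ Finset.range n, (2 * r) ^ (n - 1) := by
        apply Finset.sum_le_sum
        intro i hi
        have hi' : i < n := Finset.mem_range.mp hi
        have h1 : (r + d) ^ i ≤ (2 * r) ^ i :=
          pow_le_pow_left₀ (by positivity) (by linarith) i
        have h2 : r ^ (n - 1 - i) ≤ (2 * r) ^ (n - 1 - i) :=
          pow_le_pow_left₀ hr.le (by linarith) _
        calc (r + d) ^ i * r ^ (n - 1 - i) ≤ (2 * r) ^ i * (2 * r) ^ (n - 1 - i) :=
              mul_le_mul h1 h2 (by positivity) (by positivity)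
          _ = (2 * r) ^ (n - 1) := by rw [← pow_add]; congr 1; omega
    _ = (n : ℝ) * (2 * r) ^ (n - 1) := by
        rw [Finset.sum_const, Finset.card_range, nsmul_eq_mul]

lemma vol_diff_le {n : ℕ} (hn : 1 ≤ n) {r : ℝ} (hr : 0 < r) (x x' : Euc n) :
    (volume (closedBall x r \ closedBall x' r)).toReal
      ≤ ((n : ℝ) * (2 * r) ^ (n - 1) * (volume (closedBall (0 : Euc n) 1)).toReal)
        * dist x x' := by
  set ω := (volume (closedBall (0 : Euc n) 1)).toReal with hω
  have hω0 : 0 ≤ ω := ENNReal.toReal_nonneg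
  set d := dist x x' with hd
  have hd0 : 0 ≤ d := dist_nonneg
  have hfr : Module.finrank ℝ (Euc n) = n := finrank_euclideanSpace_fin
  have hball : ∀ (z : Euc n) (ρ : ℝ), 0 ≤ ρ →
      (volume (closedBall z ρ)).toReal = ρ ^ n * ω := by
    intro z ρ hρ
    rw [MeasureTheory.Measure.addHaar_closedBall' volume z hρ, hfr, ENNReal.toReal_mul,
      ENNReal.toReal_ofReal (by positivity)]
  have hn1 : (1 : ℝ) ≤ (n : ℝ) := by exact_mod_cast hn
  have hpow : r ^ (n - 1) ≤ (2 * r) ^ (n - 1) := pow_le_pow_left₀ hr.le (by linarith) _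
  have hpow0 : 0 ≤ (2 * r) ^ (n - 1) := by positivity
  rcases le_or_gt d r with hcase | hcase
  · have hsubset : closedBall x' r ⊆ closedBall x' (r + d) :=
      closedBall_subset_closedBall (by linarith)
    have hsub : closedBall x r \ closedBall x' r ⊆ closedBall x' (r + d) \ closedBall x' r := by
      intro z hz
      refine ⟨?_, hz.2⟩
      have h1 := hz.1
      rw [mem_closedBall] at h1 ⊢
      calc dist z x' ≤ dist z x + dist x x' := dist_triangle _ _ _
        _ ≤ r + d := by rw [← hd]; linarith
    have hfin : volume (closedBall x' (r + d) \ closedBall x' r) ≠ ∞ :=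
      ((measure_mono Set.diff_subset).trans_lt measure_closedBall_lt_top).ne
    have h1 : (volume (closedBall x r \ closedBall x' r)).toReal
        ≤ (volume (closedBall x' (r + d) \ closedBall x' r)).toReal :=
      ENNReal.toReal_mono hfin (measure_mono hsub)
    have h2 : (volume (closedBall x' (r + d) \ closedBall x' r)).toReal
        = (r + d) ^ n * ω - r ^ n * ω := by
      rw [measure_diff hsubset measurableSet_closedBall.nullMeasurableSet
          measure_closedBall_lt_top.ne,
        ENNReal.toReal_sub_of_le (measure_mono hsubset) measure_closedBall_lt_top.ne,
        hball _ _ (by linarith), hball _ _ hr.le]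
    have h3 : (r + d) ^ n * ω - r ^ n * ω ≤ (((n : ℝ) * (2 * r) ^ (n - 1)) * d) * ω := by
      have := pow_sub_le hr hd0 hcase n
      have : (r + d) ^ n - r ^ n ≤ ((n : ℝ) * (2 * r) ^ (n - 1)) * d := this
      nlinarith [hω0]
    calc (volume (closedBall x r \ closedBall x' r)).toReal
        ≤ (r + d) ^ n * ω - r ^ n * ω := h1.trans_eq h2
      _ ≤ (((n : ℝ) * (2 * r) ^ (n - 1)) * d) * ω := h3
      _ = ((n : ℝ) * (2 * r) ^ (n - 1) * ω) * d := by ring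
  · have h1 : (volume (closedBall x r \ closedBall x' r)).toReal
        ≤ (volume (closedBall x r)).toReal :=
      ENNReal.toReal_mono measure_closedBall_lt_top.ne (measure_mono Set.diff_subset)
    have h2 : (volume (closedBall x r)).toReal = r ^ n * ω := hball _ _ hr.le
    have h3 : r ^ n = r ^ (n - 1) * r := by
      rw [← pow_succ]; congr 1; omega
    have h4 : r ^ (n - 1) * r * ω ≤ ((n : ℝ) * (2 * r) ^ (n - 1) * ω) * d := by
      have hr1 : 0 ≤ r ^ (n - 1) := by positivity
      have s0 : r ^ (n - 1) * r ≤ (2 * r) ^ (n - 1) * d :=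
        mul_le_mul hpow hcase.le hr.le hpow0
      have s1 : r ^ (n - 1) * r * ω ≤ (2 * r) ^ (n - 1) * d * ω :=
        mul_le_mul_of_nonneg_right s0 hω0
      have s2 : (2 * r) ^ (n - 1) * d * ω ≤ ((n : ℝ) * (2 * r) ^ (n - 1) * ω) * d := by
        nlinarith [mul_nonneg (mul_nonneg hpow0 hd0) hω0]
      linarith
    calc (volume (closedBall x r \ closedBall x' r)).toReal
        ≤ r ^ n * ω := h1.trans_eq h2
      _ = r ^ (n - 1) * r * ω := by rw [h3]
      _ ≤ ((n : ℝ) * (2 * r) ^ (n - 1) * ω) * d := h4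

lemma integrableOn_fderiv {n : ℕ} {g : Euc n → ℝ} {L : ℝ≥0} (hg : LipschitzWith L g)
    {s : Set (Euc n)} (hs : volume s < ∞) : IntegrableOn (fderiv ℝ g) s := by
  refine Integrable.mono' (g := fun _ => (L : ℝ)) (integrableOn_const hs.ne)
    ((measurable_fderiv ℝ g).aestronglyMeasurable.restrict) ?_
  exact Filter.Eventually.of_forall fun z => norm_fderiv_le_of_lipschitz ℝ hg

lemma translate_integral {n : ℕ} {g : Euc n → ℝ} (r : ℝ) (x : Euc n) :
    (∫ y in closedBall (0 : Euc n) r, fderiv ℝ g (x + y))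
      = ∫ z in closedBall x r, fderiv ℝ g z := by
  have hpre : (fun y => x + y) ⁻¹' (closedBall x r) = closedBall (0 : Euc n) r := by
    ext z
    simp [mem_closedBall, dist_eq_norm, add_sub_cancel_left]
  rw [← hpre]
  exact (measurePreserving_add_left volume x).setIntegral_preimage_emb
    (MeasurableEquiv.addLeft x).measurableEmbedding _ _

lemma deriv_integral_diff_bound {n : ℕ} (hn : 1 ≤ n) {r : ℝ} (hr : 0 < r)
    {g : Euc n → ℝ} {L : ℝ≥0} (hg : LipschitzWith L g) (x x' : Euc n) :
    ‖(∫ y in closedBall (0 : Euc n) r, fderiv ℝ g (x + y))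
      - ∫ y in closedBall (0 : Euc n) r, fderiv ℝ g (x' + y)‖
      ≤ (2 * L * ((n : ℝ) * (2 * r) ^ (n - 1)
          * (volume (closedBall (0 : Euc n) 1)).toReal)) * dist x x' := by
  set G := fderiv ℝ g with hG
  set M := (n : ℝ) * (2 * r) ^ (n - 1) * (volume (closedBall (0 : Euc n) 1)).toReal with hM
  set A := closedBall x r with hA
  set B := closedBall x' r with hB
  have hAi : IntegrableOn G A := integrableOn_fderiv hg measure_closedBall_lt_top
  have hBi : IntegrableOn G B := integrableOn_fderiv hg measure_closedBall_lt_top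
  rw [translate_integral r x, translate_integral r x', ← hA, ← hB]
  have hsplitA : (∫ z in A ∩ B, G z) + ∫ z in A \ B, G z = ∫ z in A, G z :=
    integral_inter_add_diff measurableSet_closedBall hAi
  have hsplitB : (∫ z in B ∩ A, G z) + ∫ z in B \ A, G z = ∫ z in B, G z :=
    integral_inter_add_diff measurableSet_closedBall hBi
  have hdiffeq : (∫ z in A, G z) - ∫ z in B, G z
      = (∫ z in A \ B, G z) - ∫ z in B \ A, G z := by
    rw [← hsplitA, ← hsplitB, Set.inter_comm]
    abel
  rw [hdiffeq]
  have hGb : ∀ z, ‖G z‖ ≤ (L : ℝ) := fun z => norm_fderiv_le_of_lipschitz ℝ hg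
  have hfin1 : volume (A \ B) < ∞ :=
    (measure_mono Set.diff_subset).trans_lt measure_closedBall_lt_top
  have hfin2 : volume (B \ A) < ∞ :=
    (measure_mono Set.diff_subset).trans_lt measure_closedBall_lt_top
  have hm1 : MeasurableSet (A \ B) :=
    measurableSet_closedBall.diff measurableSet_closedBall
  have hm2 : MeasurableSet (B \ A) :=
    measurableSet_closedBall.diff measurableSet_closedBall
  have h1 : ‖∫ z in A \ B, G z‖ ≤ (L : ℝ) * (volume (A \ B)).toReal :=
    norm_setIntegral_le_of_norm_le_const hfin1 fun z _ => hGb z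
  have h2 : ‖∫ z in B \ A, G z‖ ≤ (L : ℝ) * (volume (B \ A)).toReal :=
    norm_setIntegral_le_of_norm_le_const hfin2 fun z _ => hGb z
  have hv1 : (volume (A \ B)).toReal ≤ M * dist x x' := vol_diff_le hn hr x x'
  have hv2 : (volume (B \ A)).toReal ≤ M * dist x x' := by
    rw [dist_comm]
    exact vol_diff_le hn hr x' x
  have hL0 : (0 : ℝ) ≤ L := L.coe_nonneg
  calc ‖(∫ z in A \ B, G z) - ∫ z in B \ A, G z‖
      ≤ ‖∫ z in A \ B, G z‖ + ‖∫ z in B \ A, G z‖ := norm_sub_le _ _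
    _ ≤ (L : ℝ) * (M * dist x x') + (L : ℝ) * (M * dist x x') := by
        refine add_le_add (h1.trans ?_) (h2.trans ?_) <;>
          exact mul_le_mul_of_nonneg_left (by assumption) hL0
    _ = (2 * L * M) * dist x x' := by ring

end SteklovAux

open SteklovAux Metric in
/-- For Lipschitz `f` and `D` a closed ball of radius `r > 0` centered at the origin,
the second derivative of the double Steklov average is uniformly bounded. -/
theorem steklov_double_average_second_deriv_bounded (n : ℕ) (hn : 1 ≤ n)
    (r : ℝ) (hr : 0 < r)
    (f : EuclideanSpace ℝ (Fin n) → ℝ) (L : ℝ≥0) (hf : LipschitzWith L f) :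
    ∃ K : ℝ, 0 ≤ K ∧ ∀ x : EuclideanSpace ℝ (Fin n),
      ‖iteratedFDeriv ℝ 2 (steklovAvg₂ n (Metric.closedBall 0 r) f) x‖ ≤ K := by
  set D := Metric.closedBall (0 : Euc n) r with hD
  set φ := steklovAvg n D f with hφ
  set Φ := steklovAvg₂ n D f with hΦ
  have hΦeq : Φ = steklovAvg n D φ := rfl
  have hφlip : LipschitzWith L φ := lipschitz_steklovAvg hr hf
  set c := (volume D).toReal⁻¹ with hc
  have hc0 : 0 ≤ c := inv_nonneg.2 ENNReal.toReal_nonneg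
  set M := (n : ℝ) * (2 * r) ^ (n - 1) * (volume (closedBall (0 : Euc n) 1)).toReal with hM
  have hΦderiv : ∀ x : Euc n, fderiv ℝ Φ x = c • ∫ y in D, fderiv ℝ φ (x + y) := by
    intro x
    rw [hΦeq]
    exact (hasFDerivAt_steklovAvg hr hφlip x).fderiv
  set K₀ := c * (2 * L * M) with hK₀
  have hlip2 : LipschitzWith (Real.toNNReal K₀) (fderiv ℝ Φ) := by
    apply LipschitzWith.of_dist_le_mul
    intro x x'
    rw [dist_eq_norm, hΦderiv x, hΦderiv x', ← smul_sub]
    have hkey := deriv_integral_diff_bound hn hr hφlip x x'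
    calc ‖c • ((∫ y in D, fderiv ℝ φ (x + y)) - ∫ y in D, fderiv ℝ φ (x' + y))‖
        = c * ‖(∫ y in D, fderiv ℝ φ (x + y)) - ∫ y in D, fderiv ℝ φ (x' + y)‖ := by
          rw [norm_smul, Real.norm_eq_abs, abs_of_nonneg hc0]
      _ ≤ c * ((2 * L * M) * dist x x') := mul_le_mul_of_nonneg_left hkey hc0
      _ = K₀ * dist x x' := by rw [hK₀]; ring
      _ ≤ (Real.toNNReal K₀ : ℝ) * dist x x' :=
          mul_le_mul_of_nonneg_right (Real.le_coe_toNNReal K₀) dist_nonneg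
  refine ⟨(Real.toNNReal K₀ : ℝ), NNReal.coe_nonneg _, fun x => ?_⟩
  have e1 : ‖iteratedFDeriv ℝ 2 Φ x‖ = ‖iteratedFDeriv ℝ 1 (fderiv ℝ Φ) x‖ :=
    (norm_iteratedFDeriv_fderiv (n := 1)).symm
  have e2 : ‖iteratedFDeriv ℝ 1 (fderiv ℝ Φ) x‖
      = ‖iteratedFDeriv ℝ 0 (fderiv ℝ (fderiv ℝ Φ)) x‖ :=
    (norm_iteratedFDeriv_fderiv (n := 0)).symm
  rw [e1, e2, norm_iteratedFDeriv_zero]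
  exact norm_fderiv_le_of_lipschitz ℝ hlip2
end

section
/- Let f : ℝⁿ → ℝ be Lipschitz. For every x, the averaged derivative (1/μ(D)) ∫_D fderiv f (x+y) dy belongs to the closure of the convex hull of the set of derivatives of f at points of differentiability in the translated set x + D, i.e. it lies in closure (convexHull ℝ { g | ∃ z ∈ x +ᵥ D, DifferentiableAt ℝ f z ∧ fderiv ℝ f z = g }). In particular, if fderiv φ_D (x) = 0 then 0 belongs to this closed convex hull. -/
/-!
By Rademacher's theorem `f` is differentiable at `x + y` for almost every `y`, so on `D` the
integrand `y ↦ fderiv ℝ f (x + y)` takes its values almost everywhere among the derivatives of `f`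
at points of `x + D`. It is bounded by the Lipschitz constant, hence integrable, and the average of
an integrable function with values a.e. in a set lies in the closed convex hull of that set. The
same bound lets us differentiate under the integral sign, which identifies this average with the
derivative of the Steklov average.
-/

open MeasureTheory
open scoped NNReal Pointwise

open scoped ENNReal

namespace LipschitzWith

variable {E F : Type*} [NormedAddCommGroup E] [NormedSpace ℝ E] [FiniteDimensional ℝ E]
  [MeasurableSpace E] [BorelSpace E] [NormedAddCommGroup F] [NormedSpace ℝ F]
  [FiniteDimensional ℝ F] {μ : Measure E} {f : E → F} {L : ℝ≥0} {D : Set E}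

theorem integrableOn_fderiv_add (hf : LipschitzWith L f) (x : E) (hD : μ D ≠ ∞) :
    IntegrableOn (fun y => fderiv ℝ f (x + y)) D μ :=
  Measure.integrableOn_of_bounded hD
    ((measurable_fderiv ℝ f).comp (measurable_const_add x)).aestronglyMeasurable
    (.of_forall fun _ => norm_fderiv_le_of_lipschitz ℝ hf)

variable [μ.IsAddHaarMeasure]

theorem ae_differentiableAt_add (hf : LipschitzWith L f) (x : E) :
    ∀ᵐ y ∂μ, DifferentiableAt ℝ f (x + y) :=
  (measurePreserving_add_left μ x).quasiMeasurePreserving.ae hf.ae_differentiableAt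

theorem setAverage_fderiv_add_mem_closure_convexHull (hf : LipschitzWith L f) (x : E)
    (hDm : MeasurableSet D) (hD0 : μ D ≠ 0) (hD : μ D ≠ ∞) :
    ⨍ y in D, fderiv ℝ f (x + y) ∂μ ∈ closure (convexHull ℝ
      {g | ∃ z ∈ x +ᵥ D, DifferentiableAt ℝ f z ∧ fderiv ℝ f z = g}) := by
  refine (convex_convexHull ℝ _).closure.set_average_mem isClosed_closure hD0 hD ?_
    (hf.integrableOn_fderiv_add x hD)
  filter_upwards [ae_restrict_of_ae (hf.ae_differentiableAt_add x),
    ae_restrict_mem hDm] with y hy hyD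
  exact subset_closure (subset_convexHull ℝ _ ⟨x + y, ⟨y, hyD, rfl⟩, hy, rfl⟩)

theorem hasFDerivAt_setIntegral_add (hf : LipschitzWith L f) (hD : IsCompact D) (x : E) :
    HasFDerivAt (fun x' => ∫ y in D, f (x' + y) ∂μ) (∫ y in D, fderiv ℝ f (x + y) ∂μ) x := by
  refine (hasFDerivAt_integral_of_dominated_loc_of_lip (μ := μ.restrict D) (x₀ := x)
    (F := fun x' y => f (x' + y)) (F' := fun y => fderiv ℝ f (x + y)) (bound := fun _ => (L : ℝ))
    Filter.univ_mem
    (.of_forall fun x' => (hf.continuous.comp (continuous_const_add x')).aestronglyMeasurable)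
    ?_ ?_ ?_ ?_ ?_).2
  · exact (hf.continuous.comp (continuous_const_add x)).continuousOn.integrableOn_compact hD
  · exact (hf.integrableOn_fderiv_add x hD.measure_lt_top.ne).aestronglyMeasurable
  · exact .of_forall fun y => by
      simpa [Function.comp_def] using hf.comp (isometry_add_right y).lipschitz
  · exact integrableOn_const hD.measure_lt_top.ne
  · filter_upwards [ae_restrict_of_ae (hf.ae_differentiableAt_add x)] with y hy
    simpa [Function.comp_def] using hy.hasFDerivAt.comp x ((hasFDerivAt_id x).add_const y)

end LipschitzWith

theorem steklov_average_fderiv_mem_closure_convexHull_general (n : ℕ)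
    (D : Set (EuclideanSpace ℝ (Fin n))) (hDc : IsCompact D) (hD0 : 0 < volume D)
    (f : EuclideanSpace ℝ (Fin n) → ℝ) (L : ℝ≥0) (hf : LipschitzWith L f) :
    ∀ x : EuclideanSpace ℝ (Fin n),
      ((volume D).toReal⁻¹ • ∫ y in D, fderiv ℝ f (x + y)) ∈
        closure (convexHull ℝ {g : EuclideanSpace ℝ (Fin n) →L[ℝ] ℝ |
          ∃ z ∈ x +ᵥ D, DifferentiableAt ℝ f z ∧ fderiv ℝ f z = g}) ∧
      (fderiv ℝ (steklovAvg n D f) x = 0 →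
        (0 : EuclideanSpace ℝ (Fin n) →L[ℝ] ℝ) ∈
          closure (convexHull ℝ {g : EuclideanSpace ℝ (Fin n) →L[ℝ] ℝ |
            ∃ z ∈ x +ᵥ D, DifferentiableAt ℝ f z ∧ fderiv ℝ f z = g})) := by
  intro x
  have h_avg := hf.setAverage_fderiv_add_mem_closure_convexHull x hDc.measurableSet hD0.ne'
    hDc.measure_lt_top.ne
  rw [setAverage_eq, measureReal_def] at h_avg
  have h_deriv : HasFDerivAt (steklovAvg n D f)
      ((volume D).toReal⁻¹ • ∫ y in D, fderiv ℝ f (x + y)) x :=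
    (hf.hasFDerivAt_setIntegral_add hDc x).fun_const_smul _
  exact ⟨h_avg, fun h0 => by rwa [← h0, h_deriv.fderiv]⟩

/-- The averaged derivative of a Lipschitz function `f` over `x + D` belongs to the
closed convex hull of the derivatives of `f` at points of differentiability in `x + D`;
in particular if `x` is a stationary point of the average, `0` lies in this hull. -/
theorem steklov_average_fderiv_mem_closure_convexHull (n : ℕ) (hn : 1 ≤ n)
    (D : Set (EuclideanSpace ℝ (Fin n))) (hDc : IsCompact D) (hD0 : 0 < volume D)
    (f : EuclideanSpace ℝ (Fin n) → ℝ) (L : ℝ≥0) (hf : LipschitzWith L f) :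
    ∀ x : EuclideanSpace ℝ (Fin n),
      ((volume D).toReal⁻¹ • ∫ y in D, fderiv ℝ f (x + y)) ∈
        closure (convexHull ℝ {g : EuclideanSpace ℝ (Fin n) →L[ℝ] ℝ |
          ∃ z ∈ x +ᵥ D, DifferentiableAt ℝ f z ∧ fderiv ℝ f z = g}) ∧
      (fderiv ℝ (steklovAvg n D f) x = 0 →
        (0 : EuclideanSpace ℝ (Fin n) →L[ℝ] ℝ) ∈
          closure (convexHull ℝ {g : EuclideanSpace ℝ (Fin n) →L[ℝ] ℝ |
            ∃ z ∈ x +ᵥ D, DifferentiableAt ℝ f z ∧ fderiv ℝ f z = g})) :=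
  steklov_average_fderiv_mem_closure_convexHull_general n D hDc hD0 f L hf
end

section
/- Let g : ℝⁿ → ℝ be twice continuously differentiable, with gradient ∇g and Hessian H(x) = fderiv (∇g)(x), and suppose the Hessian map x ↦ H(x) is Lipschitz with constant L₀ ≥ 0. Let x be a point at which H(x) is invertible and let Δ = −(H(x))⁻¹ (∇g(x)) be the Newton step at x. Then the gradient at the new point satisfies ‖∇g(x + Δ)‖ ≤ (L₀/2)‖Δ‖². -/
/-- After a Newton step `Δ = -(H x)⁻¹ (∇g x)` for a `C²` function with `L₀`-Lipschitz
Hessian, the gradient at the new point satisfies `‖∇g (x + Δ)‖ ≤ (L₀/2)‖Δ‖²`. -/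
theorem newton_step_gradient_bound (n : ℕ)
    (g : EuclideanSpace ℝ (Fin n) → ℝ) (hg : ContDiff ℝ 2 g)
    (L₀ : ℝ) (hL₀ : 0 ≤ L₀)
    (hLip : ∀ x₁ x₂ : EuclideanSpace ℝ (Fin n),
      ‖fderiv ℝ (gradient g) x₁ - fderiv ℝ (gradient g) x₂‖ ≤ L₀ * ‖x₁ - x₂‖)
    (x : EuclideanSpace ℝ (Fin n))
    (B : EuclideanSpace ℝ (Fin n) ≃L[ℝ] EuclideanSpace ℝ (Fin n))
    (hB : (B : EuclideanSpace ℝ (Fin n) →L[ℝ] EuclideanSpace ℝ (Fin n)) =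
      fderiv ℝ (gradient g) x)
    (Δ : EuclideanSpace ℝ (Fin n)) (hΔ : Δ = -B.symm (gradient g x)) :
    ‖gradient g (x + Δ)‖ ≤ L₀ / 2 * ‖Δ‖ ^ 2 := by
  have hC1 : ContDiff ℝ 1 (gradient g) := by
    have hfd : ContDiff ℝ 1 (fderiv ℝ g) := hg.fderiv_right (by norm_num)
    exact (InnerProductSpace.toDual ℝ (EuclideanSpace ℝ (Fin n))).symm.contDiff.comp hfd
  have hdg : Differentiable ℝ (gradient g) := hC1.differentiable one_ne_zero
  set H : EuclideanSpace ℝ (Fin n) → EuclideanSpace ℝ (Fin n) →L[ℝ] EuclideanSpace ℝ (Fin n) := fderiv ℝ (gradient g) with hH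
  set f : ℝ → EuclideanSpace ℝ (Fin n) := fun t => gradient g (x + t • Δ) - gradient g x - t • (H x Δ) with hf
  have hf' : ∀ t : ℝ, HasDerivAt f (H (x + t • Δ) Δ - H x Δ) t := by
    intro t
    have h1 : HasDerivAt (fun t : ℝ => x + t • Δ) Δ t := by
      simpa using ((hasDerivAt_id t).smul_const Δ).const_add x
    have h2 : HasDerivAt (fun t : ℝ => gradient g (x + t • Δ)) (H (x + t • Δ) Δ) t :=
      (hdg _).hasFDerivAt.comp_hasDerivAt t h1
    have h3 : HasDerivAt (fun t : ℝ => t • (H x Δ)) (H x Δ) t := by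
      simpa using (hasDerivAt_id t).smul_const (H x Δ)
    exact (h2.sub_const (gradient g x)).sub h3
  have key : ∀ t ∈ Set.Icc (0:ℝ) 1, ‖f t‖ ≤ L₀ * ‖Δ‖ ^ 2 * t ^ 2 / 2 := by
    intro t ht
    refine image_norm_le_of_norm_deriv_right_le_deriv_boundary
      (f := f) (f' := fun t => H (x + t • Δ) Δ - H x Δ) (a := 0) (b := 1)
      (B := fun t => L₀ * ‖Δ‖ ^ 2 * t ^ 2 / 2) (B' := fun t => L₀ * ‖Δ‖ ^ 2 * t)
      (fun s _ => (hf' s).continuousAt.continuousWithinAt)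
      (fun s _ => (hf' s).hasDerivWithinAt) (by simp [hf]) ?_ ?_ ht
    · intro s
      have : HasDerivAt (fun t : ℝ => L₀ * ‖Δ‖ ^ 2 * t ^ 2 / 2) (L₀ * ‖Δ‖ ^ 2 * (2 * s) / 2) s := by
        simpa using (((hasDerivAt_pow 2 s).const_mul (L₀ * ‖Δ‖ ^ 2)).div_const 2)
      convert this using 1; push_cast; ring
    · intro s hs
      have h1 : ‖H (x + s • Δ) Δ - H x Δ‖ ≤ ‖H (x + s • Δ) - H x‖ * ‖Δ‖ := by
        rw [← ContinuousLinearMap.sub_apply]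
        exact ContinuousLinearMap.le_opNorm _ _
      have h2 : ‖H (x + s • Δ) - H x‖ ≤ L₀ * (s * ‖Δ‖) := by
        have h := hLip (x + s • Δ) x
        rwa [add_sub_cancel_left, norm_smul, Real.norm_eq_abs, abs_of_nonneg hs.1] at h
      calc ‖H (x + s • Δ) Δ - H x Δ‖ ≤ L₀ * (s * ‖Δ‖) * ‖Δ‖ :=
            h1.trans (by
              exact mul_le_mul_of_nonneg_right h2 (norm_nonneg Δ))
        _ = L₀ * ‖Δ‖ ^ 2 * s := by ring
  have hf1 := key 1 (by norm_num)
  have hHxΔ : H x Δ = -(gradient g x) := by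
    rw [← hB, hΔ]; simp
  have : f 1 = gradient g (x + Δ) := by
    simp [hf, hHxΔ]
  rw [this] at hf1
  calc ‖gradient g (x + Δ)‖ ≤ L₀ * ‖Δ‖ ^ 2 * 1 ^ 2 / 2 := hf1
    _ = L₀ / 2 * ‖Δ‖ ^ 2 := by ring
end

section
/- Let g : ℝⁿ → ℝ be twice continuously differentiable with gradient ∇g and Hessian H(x) = fderiv (∇g)(x). Suppose there are constants 0 < m such that m‖z‖² ≤ ⟪H(y) z, z⟫ for all y, z (so H(y) is invertible for every y), and that the Hessian map is Lipschitz with constant L₀ ≥ 0. Let x be any point, Δ = −(H(x))⁻¹(∇g(x)) the Newton step at x, and Δ⁺ = −(H(x+Δ))⁻¹(∇g(x+Δ)) the Newton step at x + Δ. Then ‖Δ⁺‖ ≤ (L₀/(2m))‖Δ‖². -/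
/-!
Coercivity of `H(x + Δ)` gives `m ‖Δ⁺‖ ≤ ‖∇g (x + Δ)‖`. Because the Newton step cancels the
first-order Taylor term, `∇g (x + Δ) = ∇g (x + Δ) - ∇g x - H(x) Δ`, and a Lipschitz Hessian bounds
this remainder by `L₀ / 2 * ‖Δ‖ ^ 2`.
-/

open scoped RealInnerProductSpace
open Set

theorem ContDiff.gradient {F : Type*} [NormedAddCommGroup F] [InnerProductSpace ℝ F]
    [CompleteSpace F] {f : F → ℝ} {k : WithTop ℕ∞} (hf : ContDiff ℝ (k + 1) f) :
    ContDiff ℝ k (gradient f) :=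
  (InnerProductSpace.toDual ℝ F).symm.contDiff.comp (hf.fderiv_right le_rfl)

theorem norm_image_add_sub_sub_le_of_norm_hasFDerivAt_sub_le {E F : Type*}
    [NormedAddCommGroup E] [NormedSpace ℝ E] [NormedAddCommGroup F] [NormedSpace ℝ F]
    {f : E → F} {f' : E → E →L[ℝ] F} {L : ℝ} {x : E} (hf : ∀ y, HasFDerivAt f (f' y) y)
    (hf' : ∀ y, ‖f' y - f' x‖ ≤ L * ‖y - x‖) (Δ : E) :
    ‖f (x + Δ) - f x - f' x Δ‖ ≤ L / 2 * ‖Δ‖ ^ 2 := by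
  let φ : ℝ → F := fun t ↦ f (x + t • Δ) - f x - t • f' x Δ
  have hφ : ∀ t, HasDerivAt φ (f' (x + t • Δ) Δ - f' x Δ) t := by
    intro t
    have hline : HasDerivAt (fun t : ℝ ↦ x + t • Δ) Δ t := by
      simpa using ((hasDerivAt_id t).smul_const Δ).const_add x
    simpa using (((hf _).comp_hasDerivAt t hline).sub_const (f x)).fun_sub
      ((hasDerivAt_id t).smul_const (f' x Δ))
  have hB : ∀ t, HasDerivAt (fun t ↦ L / 2 * ‖Δ‖ ^ 2 * t ^ 2) (L * ‖Δ‖ ^ 2 * t) t := fun t ↦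
    ((hasDerivAt_pow 2 t).const_mul (L / 2 * ‖Δ‖ ^ 2)).congr_deriv (by norm_num; ring)
  have hbound : ∀ t ∈ Ico (0 : ℝ) 1, ‖f' (x + t • Δ) Δ - f' x Δ‖ ≤ L * ‖Δ‖ ^ 2 * t := by
    intro t ht
    calc ‖f' (x + t • Δ) Δ - f' x Δ‖ ≤ ‖f' (x + t • Δ) - f' x‖ * ‖Δ‖ :=
          (f' (x + t • Δ) - f' x).le_opNorm Δ
      _ ≤ L * ‖t • Δ‖ * ‖Δ‖ := by
          gcongr
          simpa using hf' (x + t • Δ)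
      _ = L * ‖Δ‖ ^ 2 * t := by
          rw [norm_smul, Real.norm_of_nonneg ht.1]
          ring
  simpa [φ] using image_norm_le_of_norm_deriv_right_le_deriv_boundary
    (fun t _ ↦ (hφ t).continuousAt.continuousWithinAt) (fun t _ ↦ (hφ t).hasDerivWithinAt)
    (by simp [φ]) hB hbound (right_mem_Icc.2 zero_le_one)

theorem mul_norm_le_norm_of_mul_sq_le_inner {E : Type*} [NormedAddCommGroup E]
    [InnerProductSpace ℝ E] {m : ℝ} {v w : E} (h : m * ‖v‖ ^ 2 ≤ ⟪w, v⟫) :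
    m * ‖v‖ ≤ ‖w‖ := by
  rcases (norm_nonneg v).eq_or_lt with hv | hv
  · simp [← hv]
  · refine le_of_mul_le_mul_right ?_ hv
    calc m * ‖v‖ * ‖v‖ = m * ‖v‖ ^ 2 := by ring
      _ ≤ ‖w‖ * ‖v‖ := h.trans (real_inner_le_norm w v)

theorem newton_successive_steps_quadratic_general (n : ℕ)
    (g : EuclideanSpace ℝ (Fin n) → ℝ) (hg : ContDiff ℝ 2 g)
    (m : ℝ) (hm : 0 < m)
    (hpos : ∀ y z : EuclideanSpace ℝ (Fin n),
      m * ‖z‖ ^ 2 ≤ ⟪fderiv ℝ (gradient g) y z, z⟫)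
    (L₀ : ℝ)
    (hLip : ∀ x₁ x₂ : EuclideanSpace ℝ (Fin n),
      ‖fderiv ℝ (gradient g) x₁ - fderiv ℝ (gradient g) x₂‖ ≤ L₀ * ‖x₁ - x₂‖)
    (x Δ Δ' : EuclideanSpace ℝ (Fin n))
    (hΔ : fderiv ℝ (gradient g) x Δ = -gradient g x)
    (hΔ' : fderiv ℝ (gradient g) (x + Δ) Δ' = -gradient g (x + Δ)) :
    ‖Δ'‖ ≤ L₀ / (2 * m) * ‖Δ‖ ^ 2 := by
  have hdiff : Differentiable ℝ (gradient g) := (hg.gradient (k := 1)).differentiable one_ne_zero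
  have hgrad : ‖gradient g (x + Δ)‖ ≤ L₀ / 2 * ‖Δ‖ ^ 2 := by
    simpa [hΔ] using norm_image_add_sub_sub_le_of_norm_hasFDerivAt_sub_le
      (fun y ↦ (hdiff y).hasFDerivAt) (fun y ↦ hLip y x) Δ
  have hstep : m * ‖Δ'‖ ≤ ‖gradient g (x + Δ)‖ := by
    simpa [hΔ'] using mul_norm_le_norm_of_mul_sq_le_inner (hpos (x + Δ) Δ')
  rw [div_mul_eq_mul_div, le_div_iff₀ (by positivity)]
  linarith

/-- For a `C²` function with uniformly positive definite Hessian and `L₀`-Lipschitz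
Hessian, successive Newton steps satisfy `‖Δ⁺‖ ≤ (L₀/(2m))‖Δ‖²`. -/
theorem newton_successive_steps_quadratic (n : ℕ)
    (g : EuclideanSpace ℝ (Fin n) → ℝ) (hg : ContDiff ℝ 2 g)
    (m : ℝ) (hm : 0 < m)
    (hpos : ∀ y z : EuclideanSpace ℝ (Fin n),
      m * ‖z‖ ^ 2 ≤ ⟪fderiv ℝ (gradient g) y z, z⟫)
    (L₀ : ℝ) (hL₀ : 0 ≤ L₀)
    (hLip : ∀ x₁ x₂ : EuclideanSpace ℝ (Fin n),
      ‖fderiv ℝ (gradient g) x₁ - fderiv ℝ (gradient g) x₂‖ ≤ L₀ * ‖x₁ - x₂‖)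
    (x Δ Δ' : EuclideanSpace ℝ (Fin n))
    (hΔ : fderiv ℝ (gradient g) x Δ = -gradient g x)
    (hΔ' : fderiv ℝ (gradient g) (x + Δ) Δ' = -gradient g (x + Δ)) :
    ‖Δ'‖ ≤ L₀ / (2 * m) * ‖Δ‖ ^ 2 :=
  newton_successive_steps_quadratic_general n g hg m hm hpos L₀ hLip x Δ Δ' hΔ hΔ'
end

section
/- Let g : ℝⁿ → ℝ be twice continuously differentiable with gradient ∇g and Hessian H(x) = fderiv (∇g)(x), and suppose there are constants 0 < m ≤ M such that m‖z‖² ≤ ⟪H(y) z, z⟫ ≤ M‖z‖² for all y, z. Let x be any point and Δ = −(H(x))⁻¹(∇g(x)) the Newton step at x. Then there exists a nonnegative integer l such that g(x + 2^{−l} • Δ) ≤ g(x) − 2^{−2l} (m/2) ‖Δ‖². -/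
open scoped RealInnerProductSpace

/-- Line search condition: for a `C²` function whose Hessian satisfies the two-sided
bound `m‖z‖² ≤ ⟪H y z, z⟫ ≤ M‖z‖²`, there is a nonnegative integer `l` with
`g (x + 2⁻ˡ • Δ) ≤ g x - 2⁻²ˡ (m/2) ‖Δ‖²` for the Newton step `Δ`. -/
theorem newton_line_search_step_exists (n : ℕ)
    (g : EuclideanSpace ℝ (Fin n) → ℝ) (hg : ContDiff ℝ 2 g)
    (m M : ℝ) (hm : 0 < m) (hmM : m ≤ M)
    (hpos : ∀ y z : EuclideanSpace ℝ (Fin n),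
      m * ‖z‖ ^ 2 ≤ ⟪fderiv ℝ (gradient g) y z, z⟫ ∧
      ⟪fderiv ℝ (gradient g) y z, z⟫ ≤ M * ‖z‖ ^ 2)
    (x Δ : EuclideanSpace ℝ (Fin n))
    (hΔ : fderiv ℝ (gradient g) x Δ = -gradient g x) :
    ∃ l : ℕ, g (x + ((2 : ℝ) ^ (-(l : ℤ))) • Δ) ≤
      g x - (2 : ℝ) ^ (-(2 * l : ℤ)) * (m / 2) * ‖Δ‖ ^ 2 := by
  have hM : (0:ℝ) < M := hm.trans_le hmM
  have hgdiff : Differentiable ℝ g := hg.differentiable (by norm_num)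
  -- the gradient is C¹, hence differentiable
  have hgrad_cd : ContDiff ℝ 1 (gradient g) := by
    have h1 : ContDiff ℝ 1 (fderiv ℝ g) := hg.fderiv_right (by norm_num)
    have : gradient g = fun y => (InnerProductSpace.toDual ℝ (EuclideanSpace ℝ (Fin n))).symm (fderiv ℝ g y) := rfl
    rw [this]
    exact (InnerProductSpace.toDual ℝ (EuclideanSpace ℝ (Fin n))).symm.contDiff.comp h1
  have hgrad_diff : Differentiable ℝ (gradient g) := hgrad_cd.differentiable (by norm_num)
  -- fderiv of g in terms of the gradient
  have key : ∀ y v : EuclideanSpace ℝ (Fin n), fderiv ℝ g y v = ⟪gradient g y, v⟫ := by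
    intro y v
    have : fderiv ℝ g y = InnerProductSpace.toDual ℝ (EuclideanSpace ℝ (Fin n)) (gradient g y) :=
      ((InnerProductSpace.toDual ℝ (EuclideanSpace ℝ (Fin n))).apply_symm_apply (fderiv ℝ g y)).symm
    rw [this, InnerProductSpace.toDual_apply_apply]
  -- curve
  set c : ℝ → EuclideanSpace ℝ (Fin n) := fun s => x + s • Δ with hc
  have hcd : ∀ s : ℝ, HasDerivAt c Δ s := by
    intro s
    simpa [hc] using ((hasDerivAt_id s).smul_const Δ).const_add x
  set φ : ℝ → ℝ := fun s => ⟪gradient g (c s), Δ⟫ with hφdef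
  have hφ : ∀ s : ℝ, HasDerivAt φ (⟪fderiv ℝ (gradient g) (c s) Δ, Δ⟫) s := by
    intro s
    have h1 : HasDerivAt (fun s => gradient g (c s)) (fderiv ℝ (gradient g) (c s) Δ) s :=
      ((hgrad_diff (c s)).hasFDerivAt).comp_hasDerivAt s (hcd s)
    have h2 := (HasDerivAt.inner (𝕜 := ℝ) h1 (hasDerivAt_const s Δ))
    simpa [hφdef] using h2
  set ψ : ℝ → ℝ := fun s => g (c s) with hψdef
  have hψ : ∀ s : ℝ, HasDerivAt ψ (φ s) s := by
    intro s
    have h1 : HasDerivAt ψ (fderiv ℝ g (c s) Δ) s :=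
      ((hgdiff (c s)).hasFDerivAt).comp_hasDerivAt s (hcd s)
    rw [key] at h1; exact h1
  have hφdiff : Differentiable ℝ φ := fun s => (hφ s).differentiableAt
  -- Step A: φ s - φ 0 ≤ M‖Δ‖² s for s ≥ 0
  have stepA : ∀ s : ℝ, 0 ≤ s → φ s - φ 0 ≤ M * ‖Δ‖ ^ 2 * (s - 0) := by
    intro s hs
    refine image_sub_le_mul_sub_of_deriv_le hφdiff ?_ hs
    intro u
    rw [(hφ u).deriv]
    exact (hpos (c u) Δ).2
  -- Step B: quadratic upper bound
  set χ : ℝ → ℝ := fun s => g x + s * φ 0 + M / 2 * s ^ 2 * ‖Δ‖ ^ 2 - ψ s with hχdef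
  have hχ : ∀ s : ℝ, HasDerivAt χ (φ 0 + M * s * ‖Δ‖ ^ 2 - φ s) s := by
    intro s
    have h1 : HasDerivAt (fun s : ℝ => g x + s * φ 0 + M / 2 * s ^ 2 * ‖Δ‖ ^ 2)
        (φ 0 + M * s * ‖Δ‖ ^ 2) s := by
      have := (((hasDerivAt_id s).mul_const (φ 0)).const_add (g x)).add
        ((((hasDerivAt_pow 2 s).const_mul (M / 2)).mul_const (‖Δ‖ ^ 2)))
      exact this.congr_deriv (by push_cast; ring)
    exact h1.sub (hψ s)
  have hmono : MonotoneOn χ (Set.Ici (0:ℝ)) := by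
    refine monotoneOn_of_deriv_nonneg (convex_Ici 0)
      (fun s _ => ((hχ s).differentiableAt).continuousAt.continuousWithinAt)
      (fun s _ => ((hχ s).differentiableAt).differentiableWithinAt) ?_
    intro s hs
    rw [interior_Ici] at hs
    rw [(hχ s).deriv]
    have := stepA s hs.le
    linarith
  have quadbound : ∀ t : ℝ, 0 ≤ t → ψ t ≤ g x + t * φ 0 + M / 2 * t ^ 2 * ‖Δ‖ ^ 2 := by
    intro t ht
    have h0 : χ 0 = 0 := by simp [hχdef, hψdef, hc]
    have h2 := hmono Set.self_mem_Ici (Set.mem_Ici.2 ht) ht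
    rw [h0] at h2
    have h3 : (0:ℝ) ≤ g x + t * φ 0 + M / 2 * t ^ 2 * ‖Δ‖ ^ 2 - ψ t := h2
    linarith
  -- the value of φ 0
  have hgx : gradient g x = -(fderiv ℝ (gradient g) x Δ) := by rw [hΔ, neg_neg]
  have hφ0 : φ 0 ≤ -(m * ‖Δ‖ ^ 2) := by
    have hc0 : c 0 = x := by simp [hc]
    have h1 : φ 0 = -⟪fderiv ℝ (gradient g) x Δ, Δ⟫ := by
      simp only [hφdef]; rw [hc0, hgx, inner_neg_left]
    rw [h1]
    linarith [(hpos x Δ).1]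
  -- choose l
  obtain ⟨l, hl⟩ : ∃ l : ℕ, ((1:ℝ)/2) ^ l < m / M :=
    exists_pow_lt_of_lt_one (div_pos hm hM) (by norm_num)
  refine ⟨l, ?_⟩
  set t : ℝ := (2:ℝ) ^ (-(l : ℤ)) with htdef
  have ht_eq : t = ((1:ℝ)/2) ^ l := by
    rw [htdef, zpow_neg, zpow_natCast, one_div, inv_pow]
  have ht0 : 0 < t := by rw [ht_eq]; positivity
  have htm : t ≤ m / M := by rw [ht_eq]; exact hl.le
  have ht2 : (2:ℝ) ^ (-(2 * l : ℤ)) = t ^ 2 := by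
    rw [htdef, ← zpow_natCast ((2:ℝ) ^ (-(l:ℤ))) 2, ← zpow_mul]
    norm_num [mul_comm]
  have hq := quadbound t ht0.le
  have hψt : ψ t = g (x + t • Δ) := rfl
  rw [ht2, ← hψt]
  have hn2 : (0:ℝ) ≤ ‖Δ‖ ^ 2 := by positivity
  have htM : t * M ≤ m := by
    have h := mul_le_mul_of_nonneg_right htm hM.le
    rwa [div_mul_cancel₀ m (ne_of_gt hM)] at h
  have ht1 : t ≤ 1 := htm.trans ((div_le_one hM).mpr hmM)
  have h3 : t * (M + m) ≤ 2 * m := by nlinarith [mul_le_mul_of_nonneg_right ht1 hm.le]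
  have h5 := mul_le_mul_of_nonneg_right h3 (by positivity : (0:ℝ) ≤ t * ‖Δ‖ ^ 2 / 2)
  have h1 := mul_le_mul_of_nonneg_left hφ0 ht0.le
  nlinarith [hq, h1, h5]
end
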